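/- arXiv:2506.20669 — 9 statements merged into one kernel-verified Lean document; each statement's English description precedes it below -/
import Mathlib

section
/- A finite simple graph G admits an opposition (an automorphism f of order two such that f(v) ∉ N[v] for all vertices v) if and only if the complement graph of G has an opposition matching. -/
/-- An *opposition* of a simple graph `G`: an automorphism `f` of order two such that
`f v ∉ N[v]` for every vertex `v` (i.e. `f v ≠ v` and `f v` is not adjacent to `v`). -/
def IsOpposition {V : Type*} (G : SimpleGraph V) (f : V → V) : Prop :=
  (∀ u v, G.Adj u v ↔ G.Adj (f u) (f v)) ∧ (∀ v, f (f v) = v) ∧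
    ∀ v, f v ≠ v ∧ ¬ G.Adj v (f v)

/-- A graph is *opposable* if it admits an opposition. -/
def Opposable {V : Type*} (G : SimpleGraph V) : Prop := ∃ f, IsOpposition G f

/-- `f` is an opposition of the subgraph of `G` induced by the vertex set `S`. -/
def IsOppositionOn {V : Type*} (G : SimpleGraph V) (S : Set V) (f : V → V) : Prop :=
  (∀ v ∈ S, f v ∈ S) ∧ (∀ u ∈ S, ∀ v ∈ S, (G.Adj u v ↔ G.Adj (f u) (f v))) ∧
    (∀ v ∈ S, f (f v) = v) ∧ ∀ v ∈ S, f v ≠ v ∧ ¬ G.Adj v (f v)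

/-- A graph is *almost opposable* if deleting some admissible set `S`
(`u ∈ S ⊆ N[u]` for some vertex `u`) yields an opposable graph. -/
def AlmostOpposable {V : Type*} (G : SimpleGraph V) : Prop :=
  ∃ (u : V) (S : Set V), u ∈ S ∧ (∀ v ∈ S, v = u ∨ G.Adj u v) ∧
    ∃ f, IsOppositionOn G Sᶜ f

/-- The 4-cycle `C₄`. -/
def cycle4 : SimpleGraph (Fin 4) :=
  SimpleGraph.fromRel fun i j => (i : ℕ) + 1 = (j : ℕ) ∨ ((i : ℕ) = 3 ∧ (j : ℕ) = 0)

/-- The graph `2K₂`: two disjoint edges on four vertices. -/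
def twoK2 : SimpleGraph (Fin 4) :=
  SimpleGraph.fromRel fun i j =>
    ((i : ℕ) = 0 ∧ (j : ℕ) = 1) ∨ ((i : ℕ) = 2 ∧ (j : ℕ) = 3)

/-- A perfect matching `M` of `H` is an *opposition matching* if any two distinct
edges of `M` induce a subgraph of `H` isomorphic to `K₄`, `C₄` or `2K₂`. -/
def IsOppositionMatching {V : Type*} (H : SimpleGraph V) (M : H.Subgraph) : Prop :=
  M.IsPerfectMatching ∧
    ∀ v₁ v₂ v₃ v₄, M.Adj v₁ v₂ → M.Adj v₃ v₄ → s(v₁, v₂) ≠ s(v₃, v₄) →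
      Nonempty (H.induce {v₁, v₂, v₃, v₄} ≃g SimpleGraph.completeGraph (Fin 4)) ∨
      Nonempty (H.induce {v₁, v₂, v₃, v₄} ≃g cycle4) ∨
      Nonempty (H.induce {v₁, v₂, v₃, v₄} ≃g twoK2)

/-!
An opposition `f` of `G` is equally an involutive automorphism of `Gᶜ` with `v ~ f v` in `Gᶜ`
for every `v`, so its orbits `{v, f v}` form a perfect matching of `Gᶜ`; conversely every perfect
matching is the set of orbits of its partner map, a fixed-point-free involution. For two disjoint
edges `ab`, `cd` of a graph, the induced subgraph on `{a, b, c, d}` is `K₄`, `C₄` or `2K₂` exactly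
when `a ~ c ↔ b ~ d` and `a ~ d ↔ b ~ c`. Applied to two matching edges `{u, f u}`, `{v, f v}`
this says that `f` preserves adjacency between them, so the matching is an opposition matching
precisely when its partner map is an automorphism of `Gᶜ`.
-/

namespace SimpleGraph

variable {V W : Type*}

def PreservesAdj (G : SimpleGraph V) (f : V → V) : Prop :=
  ∀ u v, G.Adj u v ↔ G.Adj (f u) (f v)

lemma preservesAdj_compl_iff {G : SimpleGraph V} {f : V → V} (hf : Function.Injective f) :
    Gᶜ.PreservesAdj f ↔ G.PreservesAdj f := by
  have compl_of {K : SimpleGraph V} (h : K.PreservesAdj f) : Kᶜ.PreservesAdj f := fun u v => by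
    simp only [compl_adj, h u v, hf.ne_iff]
  exact ⟨fun h => by simpa using compl_of h, compl_of⟩

def CrossSymmetric (H : SimpleGraph V) : Prop :=
  ∀ a b c d, a ≠ c → a ≠ d → b ≠ c → b ≠ d → H.Adj a b → H.Adj c d → (H.Adj a c ↔ H.Adj b d)

lemma CrossSymmetric.of_iso {H : SimpleGraph V} {H' : SimpleGraph W} (φ : H ≃g H')
    (h : H'.CrossSymmetric) : H.CrossSymmetric := by
  intro a b c d hac had hbc hbd hab hcd
  simpa only [φ.map_adj_iff] using
    h _ _ _ _ (φ.injective.ne hac) (φ.injective.ne had) (φ.injective.ne hbc) (φ.injective.ne hbd)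
      (φ.map_adj_iff.2 hab) (φ.map_adj_iff.2 hcd)

lemma crossSymmetric_completeGraph : (completeGraph V).CrossSymmetric :=
  fun _ _ _ _ hac _ _ hbd _ _ => iff_of_true hac hbd

lemma crossSymmetric_cycle4 : cycle4.CrossSymmetric := by
  simp only [CrossSymmetric, cycle4, fromRel_adj]; decide

set_option synthInstance.maxSize 1000 in
lemma crossSymmetric_twoK2 : twoK2.CrossSymmetric := by
  simp only [CrossSymmetric, twoK2, fromRel_adj]; decide

lemma CrossSymmetric.adj_iff_of_induce {H : SimpleGraph V} {a b c d : V}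
    (h : (H.induce {a, b, c, d}).CrossSymmetric)
    (hac : a ≠ c) (had : a ≠ d) (hbc : b ≠ c) (hbd : b ≠ d) (hab : H.Adj a b) (hcd : H.Adj c d) :
    (H.Adj a c ↔ H.Adj b d) ∧ (H.Adj a d ↔ H.Adj b c) := by
  let a' : ({a, b, c, d} : Set V) := ⟨a, by simp⟩
  let b' : ({a, b, c, d} : Set V) := ⟨b, by simp⟩
  let c' : ({a, b, c, d} : Set V) := ⟨c, by simp⟩
  let d' : ({a, b, c, d} : Set V) := ⟨d, by simp⟩
  exact ⟨h a' b' c' d' (mt (congrArg Subtype.val) hac) (mt (congrArg Subtype.val) had)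
      (mt (congrArg Subtype.val) hbc) (mt (congrArg Subtype.val) hbd) hab hcd,
    h a' b' d' c' (mt (congrArg Subtype.val) had) (mt (congrArg Subtype.val) hac)
      (mt (congrArg Subtype.val) hbd) (mt (congrArg Subtype.val) hbc) hab hcd.symm⟩

lemma nonempty_induce_range_iso {H : SimpleGraph V} {H' : SimpleGraph W} {g : W → V}
    (hg : Function.Injective g) (hadj : ∀ i j, H.Adj (g i) (g j) ↔ H'.Adj i j) :
    Nonempty (H.induce (Set.range g) ≃g H') :=
  ⟨(Embedding.isoInduceRange ⟨⟨g, hg⟩, hadj _ _⟩).symm⟩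

lemma nonempty_induce_four_iso {H : SimpleGraph V} {H' : SimpleGraph (Fin 4)} {a b c d : V}
    (hab : a ≠ b) (hac : a ≠ c) (had : a ≠ d) (hbc : b ≠ c) (hbd : b ≠ d) (hcd : c ≠ d)
    (hadj : ∀ i j, i < j → (H.Adj (![a, b, c, d] i) (![a, b, c, d] j) ↔ H'.Adj i j)) :
    Nonempty (H.induce {a, b, c, d} ≃g H') := by
  have hinj : Function.Injective ![a, b, c, d] := by
    intro i j h; fin_cases i <;> fin_cases j <;> simp_all
  have hrange : Set.range ![a, b, c, d] = {a, b, c, d} := by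
    simp only [Matrix.range_cons, Matrix.range_empty, Set.union_empty, Set.singleton_union]
  rw [← hrange]
  refine nonempty_induce_range_iso hinj fun i j => ?_
  rcases lt_trichotomy i j with hij | rfl | hji
  · exact hadj i j hij
  · simp
  · rw [H.adj_comm, H'.adj_comm]; exact hadj j i hji

theorem induce_iso_completeGraph_or_cycle4_or_twoK2_iff {H : SimpleGraph V} {a b c d : V}
    (hac : a ≠ c) (had : a ≠ d) (hbc : b ≠ c) (hbd : b ≠ d) (hab : H.Adj a b) (hcd : H.Adj c d) :
    (Nonempty (H.induce {a, b, c, d} ≃g completeGraph (Fin 4)) ∨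
        Nonempty (H.induce {a, b, c, d} ≃g cycle4) ∨
        Nonempty (H.induce {a, b, c, d} ≃g twoK2)) ↔
      (H.Adj a c ↔ H.Adj b d) ∧ (H.Adj a d ↔ H.Adj b c) := by
  constructor
  · rintro (hK | hC | h2K)
    · obtain ⟨φ⟩ := hK
      exact (crossSymmetric_completeGraph.of_iso φ).adj_iff_of_induce hac had hbc hbd hab hcd
    · obtain ⟨φ⟩ := hC
      exact (crossSymmetric_cycle4.of_iso φ).adj_iff_of_induce hac had hbc hbd hab hcd
    · obtain ⟨φ⟩ := h2K
      exact (crossSymmetric_twoK2.of_iso φ).adj_iff_of_induce hac had hbc hbd hab hcd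
  rintro ⟨hacbd, hadbc⟩
  have four_iso {H' : SimpleGraph (Fin 4)} := nonempty_induce_four_iso (H := H) (H' := H')
    hab.ne hac had hbc hbd hcd.ne
  by_cases hAC : H.Adj a c <;> by_cases hAD : H.Adj a d
  on_goal 1 => refine .inl (four_iso ?_)
  on_goal 2 =>
    rw [Set.pair_comm c d]
    refine .inr (.inl (nonempty_induce_four_iso hab.ne had hac hbd hbc hcd.ne.symm ?_))
  on_goal 3 => refine .inr (.inl (four_iso ?_))
  on_goal 4 => refine .inr (.inr (four_iso ?_))
  all_goals
    intro i j hij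
    fin_cases i <;> fin_cases j <;>
      simp [cycle4, twoK2, hab, hcd, hcd.symm, hAC, hAD, ← hacbd, ← hadbc] at hij ⊢

namespace Subgraph

def ofInvolutive {H : SimpleGraph V} {f : V → V} (hf : Function.Involutive f)
    (hadj : ∀ v, H.Adj v (f v)) : H.Subgraph where
  verts := Set.univ
  Adj u v := f u = v
  adj_sub := by rintro u _ rfl; exact hadj u
  edge_vert _ := Set.mem_univ _
  symm := ⟨by rintro u _ rfl; exact hf u⟩

lemma isPerfectMatching_iff_exists_adj_iff_eq {H : SimpleGraph V} {M : H.Subgraph} :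
    M.IsPerfectMatching ↔ ∃ f : V → V, ∀ u v, M.Adj u v ↔ f u = v := by
  rw [isPerfectMatching_iff]
  constructor
  · intro h
    choose f hf hf_unique using h
    exact ⟨f, fun u v => ⟨fun huv => (hf_unique u v huv).symm, fun h => h ▸ hf u⟩⟩
  · rintro ⟨f, hMf⟩ v
    exact ⟨f v, (hMf _ _).2 rfl, fun w hw => ((hMf _ _).1 hw).symm⟩

lemma involutive_of_adj_iff_eq {H : SimpleGraph V} {M : H.Subgraph} {f : V → V}
    (hMf : ∀ u v, M.Adj u v ↔ f u = v) : Function.Involutive f :=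
  fun _ => (hMf _ _).1 (M.adj_symm ((hMf _ _).2 rfl))

end Subgraph

end SimpleGraph

open SimpleGraph

lemma Function.Involutive.sym2_mk_eq_iff {V : Type*} {f : V → V} (hf : Function.Involutive f)
    {u v : V} : s(u, f u) = s(v, f v) ↔ u = v ∨ u = f v := by
  constructor
  · intro h
    rcases Sym2.eq_iff.1 h with ⟨huv, -⟩ | ⟨hu, -⟩
    exacts [.inl huv, .inr hu]
  · rintro (rfl | rfl)
    · rfl
    · rw [hf, Sym2.eq_swap]

lemma isOpposition_iff_compl {V : Type*} {G : SimpleGraph V} {f : V → V} :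
    IsOpposition G f ↔
      Gᶜ.PreservesAdj f ∧ Function.Involutive f ∧ ∀ v, Gᶜ.Adj v (f v) := by
  have hopp : (∀ v, f v ≠ v ∧ ¬G.Adj v (f v)) ↔ ∀ v, Gᶜ.Adj v (f v) := by
    simp only [compl_adj, ne_comm]
  rw [IsOpposition, hopp]
  constructor
  · rintro ⟨hG, hf : Function.Involutive f, hadj⟩
    exact ⟨(preservesAdj_compl_iff hf.injective).2 hG, hf, hadj⟩
  · rintro ⟨hGc, hf, hadj⟩
    exact ⟨(preservesAdj_compl_iff hf.injective).1 hGc, hf, hadj⟩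

theorem isOppositionMatching_iff_preservesAdj {V : Type*} {H : SimpleGraph V} {M : H.Subgraph}
    {f : V → V} (hMf : ∀ u v, M.Adj u v ↔ f u = v) :
    IsOppositionMatching H M ↔ H.PreservesAdj f := by
  have hf := Subgraph.involutive_of_adj_iff_eq hMf
  have hadj : ∀ v, H.Adj v (f v) := fun v => M.adj_sub ((hMf _ _).2 rfl)
  rw [IsOppositionMatching,
    and_iff_right (Subgraph.isPerfectMatching_iff_exists_adj_iff_eq.2 ⟨f, hMf⟩)]
  have hind : ∀ u v, s(u, f u) ≠ s(v, f v) →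
      ((Nonempty (H.induce {u, f u, v, f v} ≃g completeGraph (Fin 4)) ∨
          Nonempty (H.induce {u, f u, v, f v} ≃g cycle4) ∨
          Nonempty (H.induce {u, f u, v, f v} ≃g twoK2)) ↔
        (H.Adj u v ↔ H.Adj (f u) (f v)) ∧ (H.Adj u (f v) ↔ H.Adj (f u) v)) := by
    intro u v hne
    rw [Ne, hf.sym2_mk_eq_iff, not_or] at hne
    exact induce_iso_completeGraph_or_cycle4_or_twoK2_iff hne.1 hne.2 (mt hf.eq_iff.1 hne.2)
      (hf.injective.ne hne.1) (hadj u) (hadj v)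
  constructor
  · intro h u v
    by_cases hne : s(u, f u) = s(v, f v)
    · rcases hf.sym2_mk_eq_iff.1 hne with rfl | rfl
      · simp
      · rw [hf]; exact H.adj_comm _ _
    · exact ((hind u v hne).1 (h u (f u) v (f v) ((hMf _ _).2 rfl) ((hMf _ _).2 rfl) hne)).1
  · intro h u _ v _ hu hv hne
    obtain rfl := (hMf _ _).1 hu
    obtain rfl := (hMf _ _).1 hv
    exact (hind u v hne).2 ⟨h u v, (h u (f v)).trans (by rw [hf])⟩

theorem opposable_iff_complement_oppositionMatching {V : Type*} (G : SimpleGraph V) :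
    (∃ f, IsOpposition G f) ↔ ∃ M : Gᶜ.Subgraph, IsOppositionMatching Gᶜ M := by
  simp only [isOpposition_iff_compl]
  constructor
  · rintro ⟨f, hGc, hf, hadj⟩
    exact ⟨Subgraph.ofInvolutive hf hadj,
      (isOppositionMatching_iff_preservesAdj fun _ _ => .rfl).2 hGc⟩
  · rintro ⟨M, hM⟩
    obtain ⟨f, hMf⟩ := Subgraph.isPerfectMatching_iff_exists_adj_iff_eq.1 hM.1
    exact ⟨f, (isOppositionMatching_iff_preservesAdj hMf).1 hM,
      Subgraph.involutive_of_adj_iff_eq hMf, fun v => M.adj_sub ((hMf _ _).2 rfl)⟩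
end

section
/- If G is an opposable graph and H is any graph, then the Cartesian product G □ H is opposable. -/
/-- The Cartesian product of two simple graphs. -/
def cartProd {α β : Type*} (G : SimpleGraph α) (H : SimpleGraph β) : SimpleGraph (α × β) :=
  SimpleGraph.fromRel fun p q =>
    (p.1 = q.1 ∧ H.Adj p.2 q.2) ∨ (G.Adj p.1 q.1 ∧ p.2 = q.2)

/-! If `f` is an opposition of `G` and `g` is any involutive automorphism of `H` (say the
identity), then `f × g` is an opposition of `G □ H`: the first coordinate of every vertex moves
to a non-neighbour in `G`, so its image is neither equal nor adjacent to it in the product. -/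

open SimpleGraph Function

theorem cartProd_eq_boxProd {α β : Type*} (G : SimpleGraph α) (H : SimpleGraph β) :
    cartProd G H = G □ H := by
  ext p q
  simp only [cartProd, fromRel_adj, boxProd_adj]
  constructor
  · rintro ⟨-, (⟨h₁, h₂⟩ | ⟨h₁, h₂⟩) | ⟨h₁, h₂⟩ | ⟨h₁, h₂⟩⟩
    · exact Or.inr ⟨h₂, h₁⟩
    · exact Or.inl ⟨h₁, h₂⟩
    · exact Or.inr ⟨h₂.symm, h₁.symm⟩
    · exact Or.inl ⟨h₁.symm, h₂.symm⟩
  · intro h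
    refine ⟨?_, Or.inl (h.symm.imp And.symm id)⟩
    rintro rfl
    rcases h with ⟨h, -⟩ | ⟨h, -⟩ <;> exact h.ne rfl

theorem SimpleGraph.boxProd_adj_map_iff {α β : Type*} {G : SimpleGraph α} {H : SimpleGraph β}
    {f : α → α} {g : β → β} (hf : Injective f) (hg : Injective g)
    (hfG : ∀ u v, G.Adj u v ↔ G.Adj (f u) (f v)) (hgH : ∀ u v, H.Adj u v ↔ H.Adj (g u) (g v))
    (p q : α × β) : (G □ H).Adj p q ↔ (G □ H).Adj (Prod.map f g p) (Prod.map f g q) := by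
  simp only [boxProd_adj, Prod.map_fst, Prod.map_snd, hf.eq_iff, hg.eq_iff, ← hfG, ← hgH]

theorem IsOpposition.involutive {V : Type*} {G : SimpleGraph V} {f : V → V}
    (hf : IsOpposition G f) : Involutive f :=
  hf.2.1

theorem IsOpposition.boxProd_map {α β : Type*} {G : SimpleGraph α} {H : SimpleGraph β}
    {f : α → α} {g : β → β} (hf : IsOpposition G f) (hgH : ∀ u v, H.Adj u v ↔ H.Adj (g u) (g v))
    (hg : Involutive g) : IsOpposition (G □ H) (Prod.map f g) := by
  refine ⟨boxProd_adj_map_iff hf.involutive.injective hg.injective hf.1 hgH,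
    fun p => Prod.ext (hf.involutive p.1) (hg p.2), fun p => ?_⟩
  obtain ⟨hne, hnadj⟩ := hf.2.2 p.1
  refine ⟨fun h => hne (congrArg Prod.fst h), fun h => ?_⟩
  rcases boxProd_adj.mp h with ⟨hadj, -⟩ | ⟨-, heq⟩
  exacts [hnadj hadj, hne heq.symm]

theorem Opposable.boxProd {α β : Type*} {G : SimpleGraph α} (hG : Opposable G)
    (H : SimpleGraph β) : Opposable (G □ H) :=
  let ⟨_, hf⟩ := hG
  ⟨_, hf.boxProd_map (H := H) (fun _ _ => Iff.rfl) fun _ => rfl⟩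

theorem cartProd_opposable {α β : Type*} (G : SimpleGraph α) (H : SimpleGraph β)
    (hG : Opposable G) : Opposable (cartProd G H) :=
  cartProd_eq_boxProd G H ▸ hG.boxProd H
end

section
/- If G is an opposable graph and H is any graph, then the strong product G ⊠ H is opposable. -/
/-- The strong product of two simple graphs. -/
def strongProd {α β : Type*} (G : SimpleGraph α) (H : SimpleGraph β) : SimpleGraph (α × β) :=
  SimpleGraph.fromRel fun p q =>
    (p.1 = q.1 ∨ G.Adj p.1 q.1) ∧ (p.2 = q.2 ∨ H.Adj p.2 q.2)

section StrongProd

open SimpleGraph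

variable {α β : Type*} {G : SimpleGraph α} {H : SimpleGraph β}

lemma SimpleGraph.eq_or_adj_map_iff {f : α → α} (hf : Function.Injective f)
    (hadj : ∀ u v, G.Adj u v ↔ G.Adj (f u) (f v)) {u v : α} :
    f u = f v ∨ G.Adj (f u) (f v) ↔ u = v ∨ G.Adj u v := by
  rw [hf.eq_iff, ← hadj]

lemma strongProd_adj_iff {p q : α × β} :
    (strongProd G H).Adj p q ↔
      p ≠ q ∧ (p.1 = q.1 ∨ G.Adj p.1 q.1) ∧ (p.2 = q.2 ∨ H.Adj p.2 q.2) := by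
  simp only [strongProd, fromRel_adj, eq_comm (a := q.1), eq_comm (a := q.2),
    G.adj_comm q.1, H.adj_comm q.2, or_self]

lemma strongProd_adj_prodMap_iff {f : α → α} {g : β → β}
    (hf : Function.Injective f) (hfG : ∀ u v, G.Adj u v ↔ G.Adj (f u) (f v))
    (hg : Function.Injective g) (hgH : ∀ u v, H.Adj u v ↔ H.Adj (g u) (g v)) {p q : α × β} :
    (strongProd G H).Adj (Prod.map f g p) (Prod.map f g q) ↔ (strongProd G H).Adj p q := by
  simp only [strongProd_adj_iff, Prod.map_fst, Prod.map_snd, (hf.prodMap hg).ne_iff,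
    eq_or_adj_map_iff hf hfG, eq_or_adj_map_iff hg hgH]

lemma IsOpposition.prodMap_id {f : α → α} (hf : IsOpposition G f) (H : SimpleGraph β) :
    IsOpposition (strongProd G H) (Prod.map f id) := by
  obtain ⟨hadj, hinv, hopp⟩ := hf
  refine ⟨fun p q => ?_, fun p => Prod.ext (hinv p.1) rfl, fun p => ⟨?_, ?_⟩⟩
  · exact (strongProd_adj_prodMap_iff (Function.Involutive.injective hinv) hadj
      Function.injective_id fun _ _ => Iff.rfl).symm
  · exact fun h => (hopp p.1).1 (congrArg Prod.fst h)
  · intro h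
    obtain ⟨-, hfst, -⟩ := strongProd_adj_iff.1 h
    exact hfst.elim (fun h => (hopp p.1).1 h.symm) (hopp p.1).2

end StrongProd

theorem strongProd_opposable {α β : Type*} (G : SimpleGraph α) (H : SimpleGraph β)
    (hG : Opposable G) : Opposable (strongProd G H) :=
  let ⟨f, hf⟩ := hG
  ⟨Prod.map f id, hf.prodMap_id H⟩
end

section
/- If G is an opposable graph and H is any graph, then the lexicographic product G • H is opposable. -/
/-- The lexicographic product of two simple graphs. -/
def lexProd {α β : Type*} (G : SimpleGraph α) (H : SimpleGraph β) : SimpleGraph (α × β) :=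
  SimpleGraph.fromRel fun p q => G.Adj p.1 q.1 ∨ (p.1 = q.1 ∧ H.Adj p.2 q.2)

/-! An opposition `f` of `G` acts on `G • H` as `(g, h) ↦ (f g, h)`: the adjacency of the product is
determined by adjacency and equality in the first factor, both preserved by the automorphism `f`,
and `(f g, h)` differs from `(g, h)` without being adjacent to it because `f g ∉ N[g]`. -/

section

variable {α α' β : Type*} {G : SimpleGraph α} {G' : SimpleGraph α'} (H : SimpleGraph β)

theorem lexProd_adj {p q : α × β} :
    (lexProd G H).Adj p q ↔ G.Adj p.1 q.1 ∨ (p.1 = q.1 ∧ H.Adj p.2 q.2) := by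
  rw [lexProd, SimpleGraph.fromRel_adj]
  constructor
  · rintro ⟨-, h | h | ⟨hpq, hH⟩⟩
    · exact h
    · exact .inl h.symm
    · exact .inr ⟨hpq.symm, hH.symm⟩
  · intro h
    refine ⟨?_, .inl h⟩
    rintro rfl
    exact h.elim G.irrefl fun h ↦ H.irrefl h.2

theorem lexProd_adj_map_fst_iff (e : G ↪g G') {a b : α} {x y : β} :
    (lexProd G' H).Adj (e a, x) (e b, y) ↔ (lexProd G H).Adj (a, x) (b, y) := by
  simp only [lexProd_adj, e.map_adj_iff, e.injective.eq_iff]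

end

theorem IsOpposition.lexProd {α : Type*} {G : SimpleGraph α} {f : α → α} (hf : IsOpposition G f)
    {β : Type*} (H : SimpleGraph β) : IsOpposition (lexProd G H) (Prod.map f id) := by
  obtain ⟨hadj, hinv, hopp⟩ := hf
  let e : G ↪g G := ⟨⟨f, Function.LeftInverse.injective hinv⟩, (hadj _ _).symm⟩
  refine ⟨fun p q ↦ (lexProd_adj_map_fst_iff H e).symm, fun p ↦ Prod.ext (hinv p.1) rfl,
    fun p ↦ ⟨?_, ?_⟩⟩
  · simpa [Prod.ext_iff] using (hopp p.1).1
  · simp [lexProd_adj, (hopp p.1).2, (hopp p.1).1.symm]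

theorem lexProd_opposable {α β : Type*} (G : SimpleGraph α) (H : SimpleGraph β)
    (hG : Opposable G) : Opposable (lexProd G H) := by
  obtain ⟨f, hf⟩ := hG
  exact ⟨_, hf.lexProd H⟩
end

section
/- If G is an opposable graph and H is any graph, then the co-normal product G * H is opposable. -/
/-- The co-normal product of two simple graphs. -/
def conormalProd {α β : Type*} (G : SimpleGraph α) (H : SimpleGraph β) : SimpleGraph (α × β) :=
  SimpleGraph.fromRel fun p q => G.Adj p.1 q.1 ∨ H.Adj p.2 q.2

theorem conormalProd_adj {α β : Type*} {G : SimpleGraph α} {H : SimpleGraph β} {p q : α × β} :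
    (conormalProd G H).Adj p q ↔ p ≠ q ∧ (G.Adj p.1 q.1 ∨ H.Adj p.2 q.2) := by
  rw [conormalProd, SimpleGraph.fromRel_adj, G.adj_comm q.1, H.adj_comm q.2, or_self]

namespace IsOpposition

variable {α β : Type*} {G : SimpleGraph α} {f : α → α}

theorem injective (hf : IsOpposition G f) : f.Injective :=
  Function.LeftInverse.injective hf.2.1

/-- `(a, b)` and `(f a, b)` are non-adjacent because `a` and `f a` are and `H` has no loops. -/
theorem prodMap_id_s6 (hf : IsOpposition G f) (H : SimpleGraph β) :
    IsOpposition (conormalProd G H) (Prod.map f id) := by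
  have hinj : (Prod.map f id : α × β → α × β).Injective :=
    hf.injective.prodMap Function.injective_id
  obtain ⟨hadj, hinv, hfix⟩ := hf
  refine ⟨fun p q => ?_, fun p => Prod.ext (hinv p.1) rfl, fun p => ⟨?_, ?_⟩⟩
  · simp only [conormalProd_adj, hinj.ne_iff, Prod.map_fst, Prod.map_snd, id_eq, ← hadj]
  · exact fun h => (hfix p.1).1 (congrArg Prod.fst h)
  · rw [conormalProd_adj]
    rintro ⟨-, hG | hH⟩
    · exact (hfix p.1).2 hG
    · exact H.loopless.irrefl _ hH

end IsOpposition

theorem conormalProd_opposable {α β : Type*} (G : SimpleGraph α) (H : SimpleGraph β)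
    (hG : Opposable G) : Opposable (conormalProd G H) :=
  let ⟨f, hf⟩ := hG
  ⟨Prod.map f id, hf.prodMap_id_s6 H⟩
end

section
/- For every k ≥ 1 and positive integers n₁,…,n_k, the strong product of paths ⊠_{i=1}^k P_{n_i} is almost opposable. -/
/-- The path on `n` vertices. -/
def pathG (n : ℕ) : SimpleGraph (Fin n) :=
  SimpleGraph.fromRel fun i j => (i : ℕ) + 1 = (j : ℕ)

/-- The strong product of the paths `P_{n 0}, …, P_{n (k-1)}`. -/
def strongGrid (k : ℕ) (n : Fin k → ℕ) : SimpleGraph (∀ i, Fin (n i)) :=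
  SimpleGraph.fromRel fun p q => ∀ i, p i = q i ∨ (pathG (n i)).Adj (p i) (q i)


/-!
Reverse every coordinate, `p ↦ (n i - 1 - p i)ᵢ`. This is an involutive automorphism of the
strong grid, and it moves a vertex `p` outside `N[p]` exactly when some coordinate satisfies
`|2 p i + 1 - n i| ≥ 2`. The remaining vertices, whose coordinates all lie in the one or two
middle positions, form a box of side at most two around the centre `((n i - 1) / 2)ᵢ`, hence an
admissible set, and deleting it leaves the reversal as an opposition.
-/

section Opposition

variable {V : Type*} {G : SimpleGraph V} {f : V → V}

/-- The deleted set is `{v | f v ∈ N[v]}`, which `f` preserves. -/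
theorem almostOpposable_of_involutive (hf : Function.Involutive f)
    (hadj : ∀ v w, G.Adj (f v) (f w) ↔ G.Adj v w) (u : V) (hu : f u = u ∨ G.Adj u (f u))
    (hnear : ∀ v, f v = v ∨ G.Adj v (f v) → v = u ∨ G.Adj u v) : AlmostOpposable G := by
  set S : Set V := {v | f v = v ∨ G.Adj v (f v)}
  have hfS : ∀ v, f v ∈ S ↔ v ∈ S := fun v => by
    simp only [S, Set.mem_ofPred_eq, hf v, eq_comm (a := v), G.adj_comm v]
  refine ⟨u, S, hu, hnear, f, fun v hv => (hfS v).not.mpr hv,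
    fun v _ w _ => (hadj v w).symm, fun v _ => hf v, fun v hv => ?_⟩
  simpa only [S, Set.mem_compl_iff, Set.mem_ofPred_eq, not_or] using hv

end Opposition

section StrongGrid

variable {k : ℕ} {n : Fin k → ℕ}

theorem strongGrid_eq_or_adj_iff {p q : ∀ i, Fin (n i)} :
    p = q ∨ (strongGrid k n).Adj p q ↔ ∀ i, (p i : ℕ) ≤ q i + 1 ∧ (q i : ℕ) ≤ p i + 1 := by
  simp only [strongGrid, pathG, SimpleGraph.fromRel_adj, Fin.ext_iff, ne_eq, funext_iff]
  constructor
  · rintro (h | ⟨-, h | h⟩) i <;> have := h i <;> omega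
  · intro h
    by_cases hpq : ∀ i, (p i : ℕ) = q i
    · exact Or.inl hpq
    · exact Or.inr ⟨hpq, Or.inl fun i => by have := h i; omega⟩

def strongGridRev (p : ∀ i, Fin (n i)) : ∀ i, Fin (n i) := fun i => (p i).rev

theorem strongGridRev_involutive : Function.Involutive (strongGridRev (n := n)) :=
  fun p => funext fun i => Fin.rev_rev (p i)

theorem strongGrid_adj_strongGridRev_iff {p q : ∀ i, Fin (n i)} :
    (strongGrid k n).Adj (strongGridRev p) (strongGridRev q) ↔ (strongGrid k n).Adj p q := by
  have hclose : p = q ∨ (strongGrid k n).Adj p q ↔ strongGridRev p = strongGridRev q ∨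
      (strongGrid k n).Adj (strongGridRev p) (strongGridRev q) := by
    simp only [strongGrid_eq_or_adj_iff, strongGridRev, Fin.val_rev]
    refine forall_congr' fun i => ?_
    have := (p i).isLt
    have := (q i).isLt
    omega
  have hne : strongGridRev p = strongGridRev q ↔ p = q := strongGridRev_involutive.injective.eq_iff
  constructor <;> intro h
  · exact (hclose.mpr (Or.inr h)).resolve_left fun hpq => h.ne (hne.mpr hpq)
  · exact (hclose.mp (Or.inr h)).resolve_left fun hpq => h.ne (hne.mp hpq)

theorem strongGridRev_eq_or_adj_iff {p : ∀ i, Fin (n i)} :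
    strongGridRev p = p ∨ (strongGrid k n).Adj p (strongGridRev p) ↔
      ∀ i, n i ≤ 2 * (p i : ℕ) + 2 ∧ 2 * (p i : ℕ) ≤ n i := by
  rw [eq_comm, strongGrid_eq_or_adj_iff]
  refine forall_congr' fun i => ?_
  simp only [strongGridRev, Fin.val_rev]
  have := (p i).isLt
  omega

def strongGridCenter (hn : ∀ i, 1 ≤ n i) : ∀ i, Fin (n i) :=
  fun i => ⟨(n i - 1) / 2, by have := hn i; omega⟩

theorem strongGridCenter_val (hn : ∀ i, 1 ≤ n i) (i : Fin k) :
    (strongGridCenter hn i : ℕ) = (n i - 1) / 2 :=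
  rfl

end StrongGrid

theorem strongGrid_almostOpposable_general (k : ℕ) (n : Fin k → ℕ)
    (hn : ∀ i, 1 ≤ n i) : AlmostOpposable (strongGrid k n) := by
  refine almostOpposable_of_involutive strongGridRev_involutive
    (fun _ _ => strongGrid_adj_strongGridRev_iff) (strongGridCenter hn) ?_ fun v hv => ?_
  · refine strongGridRev_eq_or_adj_iff.mpr fun i => ?_
    rw [strongGridCenter_val]
    omega
  · rw [eq_comm, strongGrid_eq_or_adj_iff]
    intro i
    have := strongGridRev_eq_or_adj_iff.mp hv i
    rw [strongGridCenter_val]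
    omega

theorem strongGrid_almostOpposable (k : ℕ) (hk : 1 ≤ k) (n : Fin k → ℕ)
    (hn : ∀ i, 1 ≤ n i) : AlmostOpposable (strongGrid k n) :=
  strongGrid_almostOpposable_general k n hn
end

section
/- If n is even, then the n × m Knight's grid is opposable, via the map (x,y) ↦ (n−x−1, y). -/
/-- The `n × m` Knight's grid. -/
def knightGrid (n m : ℕ) : SimpleGraph (Fin n × Fin m) :=
  SimpleGraph.fromRel fun p q =>
    (|(p.1 : ℤ) - (q.1 : ℤ)| = 1 ∧ |(p.2 : ℤ) - (q.2 : ℤ)| = 2) ∨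
    (|(p.1 : ℤ) - (q.1 : ℤ)| = 2 ∧ |(p.2 : ℤ) - (q.2 : ℤ)| = 1)

theorem Fin.intCast_rev {n : ℕ} (i : Fin n) : ((i.rev : ℕ) : ℤ) = n - 1 - i := by
  have := i.isLt
  rw [Fin.val_rev]
  omega

theorem Fin.abs_intCast_rev_sub_rev {n : ℕ} (i j : Fin n) :
    |((i.rev : ℕ) : ℤ) - (j.rev : ℕ)| = |(i : ℤ) - j| := by
  rw [Fin.intCast_rev, Fin.intCast_rev, abs_sub_comm]
  ring_nf

theorem Fin.rev_ne_self_of_even {n : ℕ} (hn : Even n) (i : Fin n) : i.rev ≠ i := by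
  obtain ⟨k, rfl⟩ := hn
  intro h
  have := congrArg Fin.val h
  rw [Fin.val_rev] at this
  omega

theorem knightGrid_adj_iff {n m : ℕ} {p q : Fin n × Fin m} :
    (knightGrid n m).Adj p q ↔
      (|(p.1 : ℤ) - (q.1 : ℤ)| = 1 ∧ |(p.2 : ℤ) - (q.2 : ℤ)| = 2) ∨
        (|(p.1 : ℤ) - (q.1 : ℤ)| = 2 ∧ |(p.2 : ℤ) - (q.2 : ℤ)| = 1) := by
  simp only [knightGrid, SimpleGraph.fromRel_adj]
  constructor
  · rintro ⟨-, h | h⟩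
    · exact h
    · simpa only [abs_sub_comm] using h
  · intro h
    refine ⟨fun hpq => ?_, Or.inl h⟩
    subst hpq
    simp at h

theorem knightGrid_not_adj_of_snd_eq {n m : ℕ} {p q : Fin n × Fin m} (h : p.2 = q.2) :
    ¬(knightGrid n m).Adj p q := by
  simp [knightGrid_adj_iff, h]

theorem knightGrid_adj_rev_fst_iff {n m : ℕ} {p q : Fin n × Fin m} :
    (knightGrid n m).Adj (p.1.rev, p.2) (q.1.rev, q.2) ↔ (knightGrid n m).Adj p q := by
  simp only [knightGrid_adj_iff, Fin.abs_intCast_rev_sub_rev]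

theorem knightGrid_even_opposable (n m : ℕ) (hn : Even n) :
    IsOpposition (knightGrid n m) (fun p => (p.1.rev, p.2)) ∧
      Opposable (knightGrid n m) := by
  have reflection : IsOpposition (knightGrid n m) (fun p => (p.1.rev, p.2)) :=
    ⟨fun _ _ => knightGrid_adj_rev_fst_iff.symm, fun _ => by simp only [Fin.rev_rev],
      fun p => ⟨fun h => Fin.rev_ne_self_of_even hn p.1 (congrArg Prod.fst h),
        knightGrid_not_adj_of_snd_eq rfl⟩⟩
  exact ⟨reflection, _, reflection⟩
end

section
/- If n is even, then the n × m Bishop's grid is opposable, via the map (x,y) ↦ (n−x−1, y). -/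
/-- The `n × m` Bishop's grid. -/
def bishopGrid (n m : ℕ) : SimpleGraph (Fin n × Fin m) :=
  SimpleGraph.fromRel fun p q =>
    |(p.1 : ℤ) - (q.1 : ℤ)| = |(p.2 : ℤ) - (q.2 : ℤ)|


/-! The reflection `x ↦ n - 1 - x` preserves horizontal distances, so it is an automorphism; it
maps each vertex into its own row, where no two vertices are adjacent; and for even `n` it has
no fixed column. -/

namespace Fin

lemma rev_ne_self_of_even_s16 {n : ℕ} (hn : Even n) (x : Fin n) : x.rev ≠ x := by
  obtain ⟨k, rfl⟩ := hn
  intro h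
  have := congrArg Fin.val h
  rw [Fin.val_rev] at this
  omega

lemma abs_sub_rev_rev {n : ℕ} (x y : Fin n) :
    |((x.rev : ℕ) : ℤ) - (y.rev : ℕ)| = |(x : ℤ) - y| := by
  have hx := x.isLt
  have hy := y.isLt
  rw [Fin.val_rev, Fin.val_rev, abs_sub_comm]
  congr 1
  omega

end Fin

namespace bishopGrid

variable {n m : ℕ}

lemma adj_iff {p q : Fin n × Fin m} :
    (bishopGrid n m).Adj p q ↔
      p ≠ q ∧ |(p.1 : ℤ) - (q.1 : ℤ)| = |(p.2 : ℤ) - (q.2 : ℤ)| := by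
  rw [bishopGrid, SimpleGraph.fromRel_adj, abs_sub_comm (q.1 : ℤ), abs_sub_comm (q.2 : ℤ), or_self]

lemma not_adj_of_snd_eq {p q : Fin n × Fin m} (h : p.2 = q.2) : ¬ (bishopGrid n m).Adj p q := by
  rw [adj_iff, h, sub_self, abs_zero, abs_eq_zero, sub_eq_zero, Nat.cast_inj, Fin.val_inj]
  exact fun ⟨hne, h1⟩ => hne (Prod.ext h1 h)

lemma adj_rev_fst_iff {p q : Fin n × Fin m} :
    (bishopGrid n m).Adj (p.1.rev, p.2) (q.1.rev, q.2) ↔ (bishopGrid n m).Adj p q := by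
  simp only [adj_iff, Fin.abs_sub_rev_rev, ne_eq, Fin.rev_inj, Prod.ext_iff]

end bishopGrid

theorem bishopGrid_even_opposable (n m : ℕ) (hn : Even n) :
    IsOpposition (bishopGrid n m) (fun p => (p.1.rev, p.2)) ∧
      Opposable (bishopGrid n m) := by
  have hf : IsOpposition (bishopGrid n m) (fun p => (p.1.rev, p.2)) :=
    ⟨fun _ _ => bishopGrid.adj_rev_fst_iff.symm, fun _ => by simp only [Fin.rev_rev],
      fun v => ⟨fun h => Fin.rev_ne_self_of_even_s16 hn v.1 (congrArg Prod.fst h),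
        bishopGrid.not_adj_of_snd_eq rfl⟩⟩
  exact ⟨hf, _, hf⟩
end

section
/- If n is odd or m is odd, then the n × m Queen's grid is almost opposable: there is an admissible set S (the middle column when exactly one dimension is odd, or the closed neighbourhood of the centre vertex when both are odd) such that (x,y) ↦ (n−x−1, m−y−1) is an opposition of the Queen's grid minus S. -/
/-- The `n × m` Queen's grid. -/
def queenGrid (n m : ℕ) : SimpleGraph (Fin n × Fin m) :=
  SimpleGraph.fromRel fun p q =>
    p.1 = q.1 ∨ p.2 = q.2 ∨ |(p.1 : ℤ) - (q.1 : ℤ)| = |(p.2 : ℤ) - (q.2 : ℤ)|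

/-!
The half-turn `(x, y) ↦ (n - 1 - x, m - 1 - y)` is an involutive automorphism of the Queen's
grid, hence an opposition of the subgraph induced by the vertices it sends outside their closed
neighbourhood. A vertex `(x, y)` fails this exactly when `2x = n - 1`, `2y = m - 1` or
`|2x - (n - 1)| = |2y - (m - 1)|`. If exactly one of `n`, `m` is odd, parity leaves only the
middle column (or row), which lies in the closed neighbourhood of each of its vertices; if both
are odd, the three conditions describe the closed neighbourhood of the centre.
-/

theorem almostOpposable_of_isOppositionOn_compl_closedNbhd {V : Type*} {G : SimpleGraph V}
    (u : V) {f : V → V} (hf : IsOppositionOn G {v | ¬ (v = u ∨ G.Adj u v)} f) :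
    AlmostOpposable G :=
  ⟨u, {v | v = u ∨ G.Adj u v}, Or.inl rfl, fun _ hv => hv, f, hf⟩

theorem isOppositionOn_of_involutive {V : Type*} {G : SimpleGraph V} {f : V → V}
    (hf : Function.Involutive f) (hadj : ∀ u v, G.Adj u v ↔ G.Adj (f u) (f v)) :
    IsOppositionOn G {v | f v ≠ v ∧ ¬ G.Adj v (f v)} f := by
  refine ⟨fun v ⟨hne, hnadj⟩ => ⟨?_, ?_⟩, fun u _ v _ => hadj u v, fun v _ => hf v,
    fun v hv => hv⟩
  · rwa [hf v, ne_comm]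
  · rwa [hf v, G.adj_comm]

namespace queenGrid

variable {n m : ℕ}

theorem adj_iff (p q : Fin n × Fin m) :
    (queenGrid n m).Adj p q ↔ p ≠ q ∧
      (p.1 = q.1 ∨ p.2 = q.2 ∨ |(p.1 : ℤ) - q.1| = |(p.2 : ℤ) - q.2|) := by
  simp only [queenGrid, SimpleGraph.fromRel_adj, ne_eq, eq_comm (a := q.1), eq_comm (a := q.2),
    abs_sub_comm (q.1 : ℤ), abs_sub_comm (q.2 : ℤ), or_self]

theorem eq_or_adj_of_fst_eq {p q : Fin n × Fin m} (h : p.1 = q.1) :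
    q = p ∨ (queenGrid n m).Adj p q := by
  rw [adj_iff]; tauto

theorem eq_or_adj_of_snd_eq {p q : Fin n × Fin m} (h : p.2 = q.2) :
    q = p ∨ (queenGrid n m).Adj p q := by
  rw [adj_iff]; tauto

theorem almostOpposable_of_isOppositionOn_fst_ne {k : ℕ} (hk : k < n) (hm : 0 < m)
    {f : Fin n × Fin m → Fin n × Fin m}
    (hf : IsOppositionOn (queenGrid n m) {p | (p.1 : ℕ) ≠ k} f) : AlmostOpposable (queenGrid n m) :=
  ⟨(⟨k, hk⟩, ⟨0, hm⟩), {p | (p.1 : ℕ) = k}, rfl, fun _ hv => eq_or_adj_of_fst_eq (Fin.ext hv.symm),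
    f, hf⟩

theorem almostOpposable_of_isOppositionOn_snd_ne {k : ℕ} (hn : 0 < n) (hk : k < m)
    {f : Fin n × Fin m → Fin n × Fin m}
    (hf : IsOppositionOn (queenGrid n m) {p | (p.2 : ℕ) ≠ k} f) : AlmostOpposable (queenGrid n m) :=
  ⟨(⟨0, hn⟩, ⟨k, hk⟩), {p | (p.2 : ℕ) = k}, rfl, fun _ hv => eq_or_adj_of_snd_eq (Fin.ext hv.symm),
    f, hf⟩

def halfTurn (p : Fin n × Fin m) : Fin n × Fin m := (p.1.rev, p.2.rev)

theorem halfTurn_involutive : Function.Involutive (halfTurn (n := n) (m := m)) := by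
  intro p; simp [halfTurn]

theorem adj_iff_adj_halfTurn (p q : Fin n × Fin m) :
    (queenGrid n m).Adj p q ↔ (queenGrid n m).Adj (halfTurn p) (halfTurn q) := by
  simp only [adj_iff, halfTurn, ne_eq, Prod.ext_iff, Fin.ext_iff, Fin.val_rev, abs_eq_abs]
  have := p.1.isLt; have := p.2.isLt; have := q.1.isLt; have := q.2.isLt
  omega

theorem halfTurn_ne_and_not_adj_iff (p : Fin n × Fin m) :
    halfTurn p ≠ p ∧ ¬ (queenGrid n m).Adj p (halfTurn p) ↔
      2 * (p.1 : ℤ) ≠ n - 1 ∧ 2 * (p.2 : ℤ) ≠ m - 1 ∧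
        |2 * (p.1 : ℤ) - (n - 1)| ≠ |2 * (p.2 : ℤ) - (m - 1)| := by
  simp only [adj_iff, halfTurn, ne_eq, Prod.ext_iff, Fin.ext_iff, Fin.val_rev, abs_eq_abs]
  have := p.1.isLt; have := p.2.isLt
  omega

theorem isOppositionOn_halfTurn_of_odd_of_even (hn : Odd n) (hm : Even m) :
    IsOppositionOn (queenGrid n m) {p | (p.1 : ℕ) ≠ (n - 1) / 2} halfTurn := by
  convert isOppositionOn_of_involutive halfTurn_involutive adj_iff_adj_halfTurn using 2
  ext p
  simp only [halfTurn_ne_and_not_adj_iff, ne_eq, abs_eq_abs]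
  obtain ⟨a, rfl⟩ := hn
  obtain ⟨b, rfl⟩ := hm
  omega

theorem isOppositionOn_halfTurn_of_even_of_odd (hn : Even n) (hm : Odd m) :
    IsOppositionOn (queenGrid n m) {p | (p.2 : ℕ) ≠ (m - 1) / 2} halfTurn := by
  convert isOppositionOn_of_involutive halfTurn_involutive adj_iff_adj_halfTurn using 2
  ext p
  simp only [halfTurn_ne_and_not_adj_iff, ne_eq, abs_eq_abs]
  obtain ⟨a, rfl⟩ := hn
  obtain ⟨b, rfl⟩ := hm
  omega

def centre (hn : Odd n) (hm : Odd m) : Fin n × Fin m :=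
  (⟨(n - 1) / 2, by obtain ⟨a, rfl⟩ := hn; omega⟩, ⟨(m - 1) / 2, by obtain ⟨b, rfl⟩ := hm; omega⟩)

theorem isOppositionOn_halfTurn_of_odd_of_odd (hn : Odd n) (hm : Odd m) :
    IsOppositionOn (queenGrid n m)
      {p | ¬ (p = centre hn hm ∨ (queenGrid n m).Adj (centre hn hm) p)} halfTurn := by
  convert isOppositionOn_of_involutive halfTurn_involutive adj_iff_adj_halfTurn using 2
  ext p
  rw [halfTurn_ne_and_not_adj_iff, adj_iff]
  simp only [centre, Prod.ext_iff, Fin.ext_iff, ne_eq, abs_eq_abs]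
  obtain ⟨a, rfl⟩ := hn
  obtain ⟨b, rfl⟩ := hm
  omega

end queenGrid

theorem queenGrid_odd_almostOpposable (n m : ℕ) (hn0 : 0 < n) (hm0 : 0 < m) :
    (Odd n → Even m →
      IsOppositionOn (queenGrid n m) {p | (p.1 : ℕ) ≠ (n - 1) / 2}
        (fun p => (p.1.rev, p.2.rev))) ∧
    (Even n → Odd m →
      IsOppositionOn (queenGrid n m) {p | (p.2 : ℕ) ≠ (m - 1) / 2}
        (fun p => (p.1.rev, p.2.rev))) ∧
    (∀ (hno : Odd n) (hmo : Odd m),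
      IsOppositionOn (queenGrid n m)
        {p | ¬ (p = (⟨(n - 1) / 2, by obtain ⟨a, ha⟩ := hno; omega⟩,
                     ⟨(m - 1) / 2, by obtain ⟨a, ha⟩ := hmo; omega⟩) ∨
                (queenGrid n m).Adj
                  (⟨(n - 1) / 2, by obtain ⟨a, ha⟩ := hno; omega⟩,
                   ⟨(m - 1) / 2, by obtain ⟨a, ha⟩ := hmo; omega⟩) p)}
        (fun p => (p.1.rev, p.2.rev))) ∧
    ((Odd n ∨ Odd m) → AlmostOpposable (queenGrid n m)) := by
  refine ⟨queenGrid.isOppositionOn_halfTurn_of_odd_of_even,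
    queenGrid.isOppositionOn_halfTurn_of_even_of_odd,
    queenGrid.isOppositionOn_halfTurn_of_odd_of_odd, fun hnm => ?_⟩
  rcases Nat.even_or_odd n with hn | hn <;> rcases Nat.even_or_odd m with hm | hm
  · simp only [← Nat.not_even_iff_odd, hn, hm, not_true, or_self] at hnm
  · exact queenGrid.almostOpposable_of_isOppositionOn_snd_ne hn0 (by omega)
      (queenGrid.isOppositionOn_halfTurn_of_even_of_odd hn hm)
  · exact queenGrid.almostOpposable_of_isOppositionOn_fst_ne (by omega) hm0
      (queenGrid.isOppositionOn_halfTurn_of_odd_of_even hn hm)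
  · exact almostOpposable_of_isOppositionOn_compl_closedNbhd _
      (queenGrid.isOppositionOn_halfTurn_of_odd_of_odd hn hm)
end
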